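/- arXiv:2509.12563 — 2 statements merged into one kernel-verified Lean document; each statement's English description precedes it below -/
import Mathlib

section
/- For k ≥ 2, let R^k_i be the family of trees defined recursively: R^k_1 is the set of all trees on k vertices, and T ∈ R^k_i (i ≥ 2) iff T is obtained from some T' ∈ R^k_{i−1} and a tree T'' on k vertices by adding a single edge joining a vertex of T' to a vertex of T''. If T ∈ R^k_{n/k} (so k divides n = |V(T)|), then α_k(T) = ((k−1)/k)·n. -/
open SimpleGraph

/-- A set `S` is a generalized `k`-independent set in `G` if the induced subgraph `G[S]`
contains no tree on `k` vertices, equivalently every connected component of `G[S]`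
has at most `k - 1` vertices. -/
def IsGenKIndep {V : Type*} (G : SimpleGraph V) (k : ℕ) (S : Set V) : Prop :=
  ∀ c : (G.induce S).ConnectedComponent, Nat.card c.supp ≤ k - 1

/-- The generalized `k`-independence number: the maximum size of a generalized
`k`-independent set. -/
noncomputable def alphaK {V : Type*} (G : SimpleGraph V) (k : ℕ) : ℕ :=
  sSup {m | ∃ S : Set V, IsGenKIndep G k S ∧ S.ncard = m}

/-- `InRk G k i S` says that the induced subgraph of `G` on `S` belongs to the
family `R_i^k`: it is obtained by attaching `i` `k`-vertex trees one by one,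
each joined to the previous part by a single edge. -/
inductive InRk {V : Type*} (G : SimpleGraph V) (k : ℕ) : ℕ → Set V → Prop
  | base (S : Set V) (hcard : S.ncard = k) (htree : (G.induce S).IsTree) : InRk G k 1 S
  | step (i : ℕ) (S B : Set V) (hS : InRk G k i S) (hdisj : Disjoint S B)
      (hcard : B.ncard = k) (htree : (G.induce B).IsTree)
      (hone : ∃! p : V × V, p.1 ∈ S ∧ p.2 ∈ B ∧ G.Adj p.1 p.2) :
      InRk G k (i + 1) (S ∪ B)

/-! Each `k`-vertex block of `T ∈ R^k_i` is connected, so a set whose components have fewer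
than `k` vertices misses at least one vertex of every block: `α_k(T) ≤ n - i`. Conversely,
delete one vertex of the first block and, from every later block, the endpoint of the unique
edge joining it to the earlier part; the blocks then fall apart into components of `k - 1`
vertices, so `α_k(T) = n - i = (k - 1) n / k`. -/

section

variable {V : Type*} {G : SimpleGraph V} {k i : ℕ}

theorem SimpleGraph.Connected.subset_or_subset_of_forall_not_adj {T A B : Set V}
    (hT : (G.induce T).Connected) (hTAB : T ⊆ A ∪ B) (hAB : ∀ a ∈ A, ∀ b ∈ B, ¬ G.Adj a b) :
    T ⊆ A ∨ T ⊆ B := by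
  by_contra! h
  obtain ⟨⟨u, huT, huA⟩, ⟨v, hvT, hvB⟩⟩ := And.intro (Set.not_subset.1 h.1) (Set.not_subset.1 h.2)
  have hvA : v ∈ A := (hTAB hvT).resolve_right hvB
  obtain ⟨d, -, hd₁, hd₂⟩ := (hT.preconnected ⟨v, hvT⟩ ⟨u, huT⟩).some.exists_boundary_dart
    {x | x.1 ∈ A} hvA huA
  exact hAB _ hd₁ _ ((hTAB d.snd.2).resolve_left hd₂) d.adj

section Finite

variable [Finite V]

theorem isGenKIndep_iff {S : Set V} :
    IsGenKIndep G k S ↔ ∀ T ⊆ S, (G.induce T).Connected → T.ncard ≤ k - 1 := by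
  constructor
  · intro hS T hTS hT
    obtain ⟨t⟩ := hT.nonempty
    let c := (G.induce S).connectedComponentMk (Set.inclusion hTS t)
    have hmem (u : T) : Set.inclusion hTS u ∈ c.supp :=
      ConnectedComponent.sound ((hT.preconnected u t).map (G.induceHomOfLE hTS).toHom)
    calc T.ncard = Nat.card T := (Nat.card_coe_set_eq T).symm
      _ ≤ Nat.card c.supp := Nat.card_le_card_of_injective (fun u => ⟨_, hmem u⟩)
          fun u v huv => Set.inclusion_injective hTS (congrArg Subtype.val huv)
      _ ≤ k - 1 := hS c
  · intro h c
    let f : c.toSimpleGraph →g G.induce (Subtype.val '' c.supp) :=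
      ⟨fun x => ⟨x.1.1, x.1, x.2, rfl⟩, id⟩
    have hf : Function.Surjective f := by
      rintro ⟨_, x, hx, rfl⟩
      exact ⟨⟨x, hx⟩, rfl⟩
    calc Nat.card c.supp = (Subtype.val '' c.supp).ncard := by
          rw [Set.ncard_image_of_injective _ Subtype.val_injective, Nat.card_coe_set_eq]
      _ ≤ k - 1 := h _ (by simp) (c.connected_toSimpleGraph.map f hf)

theorem isGenKIndep_of_ncard_le {S : Set V} (h : S.ncard ≤ k - 1) : IsGenKIndep G k S :=
  isGenKIndep_iff.2 fun _ hTS _ => (Set.ncard_le_ncard hTS).trans h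

theorem IsGenKIndep.union {A B : Set V} (hA : IsGenKIndep G k A) (hB : IsGenKIndep G k B)
    (hAB : ∀ a ∈ A, ∀ b ∈ B, ¬ G.Adj a b) : IsGenKIndep G k (A ∪ B) := by
  rw [isGenKIndep_iff] at *
  intro T hT hconn
  rcases hconn.subset_or_subset_of_forall_not_adj hT hAB with h | h
  exacts [hA T h hconn, hB T h hconn]

theorem IsGenKIndep.not_subset {S T : Set V} (hS : IsGenKIndep G k S)
    (hT : (G.induce T).Connected) (hk : k ≤ T.ncard) : ¬ T ⊆ S := fun hTS => by
  have hle := isGenKIndep_iff.1 hS T hTS hT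
  have hpos : 0 < T.ncard := (Set.nonempty_coe_sort.1 hT.nonempty).ncard_pos
  omega

end Finite

namespace InRk

theorem index_pos {S : Set V} (h : InRk G k i S) : 0 < i := by
  cases h <;> omega

variable [Finite V]

theorem ncard_eq {S : Set V} (h : InRk G k i S) : S.ncard = k * i := by
  induction h with
  | base S hcard _ => rw [hcard, mul_one]
  | step i S B _ hdisj hcard _ _ ih => rw [Set.ncard_union_eq hdisj, ih, hcard, mul_add_one]

theorem le_ncard_sdiff {S A : Set V} (h : InRk G k i S) (hA : IsGenKIndep G k A) :
    i ≤ (S \ A).ncard := by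
  induction h with
  | base S hcard htree =>
    exact (Set.sdiff_nonempty.2 (hA.not_subset htree.connected hcard.ge)).ncard_pos
  | step i S B _ hdisj hcard htree _ ih =>
    have hB : 0 < (B \ A).ncard :=
      (Set.sdiff_nonempty.2 (hA.not_subset htree.connected hcard.ge)).ncard_pos
    rw [Set.union_sdiff_distrib, Set.ncard_union_eq (hdisj.mono Set.sdiff_subset Set.sdiff_subset)]
    omega

theorem exists_isGenKIndep_ncard_sdiff_eq {S : Set V} (h : InRk G k i S) :
    ∃ A ⊆ S, IsGenKIndep G k A ∧ (S \ A).ncard = i := by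
  induction h with
  | base S hcard htree =>
    obtain ⟨v, hv⟩ := Set.nonempty_coe_sort.1 htree.connected.nonempty
    refine ⟨S \ {v}, Set.sdiff_subset, isGenKIndep_of_ncard_le ?_, ?_⟩
    · rw [Set.ncard_sdiff_singleton_of_mem hv, hcard]
    · rw [Set.sdiff_sdiff_cancel_left (Set.singleton_subset_iff.2 hv), Set.ncard_singleton]
  | step i S B _ hdisj hcard _ hone ih =>
    obtain ⟨A, hAS, hA, hAi⟩ := ih
    obtain ⟨⟨a, b⟩, ⟨-, hbB, -⟩, huniq⟩ := hone
    have hbS : b ∉ S := hdisj.notMem_of_mem_right hbB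
    have hbA : b ∉ A := fun h => hbS (hAS h)
    refine ⟨A ∪ (B \ {b}), Set.union_subset_union hAS Set.sdiff_subset,
      hA.union (isGenKIndep_of_ncard_le ?_) ?_, ?_⟩
    · rw [Set.ncard_sdiff_singleton_of_mem hbB, hcard]
    · rintro x hx y ⟨hyB, hyb⟩ hxy
      exact hyb (congrArg Prod.snd (huniq (x, y) ⟨hAS hx, hyB, hxy⟩))
    · have hdiff : (S ∪ B) \ (A ∪ (B \ {b})) = insert b (S \ A) := by
        ext x
        by_cases hxb : x = b
        · subst hxb
          simp [hbB, hbS, hbA]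
        · have : x ∈ S → x ∉ B := fun hx => hdisj.notMem_of_mem_left hx
          simp only [Set.mem_sdiff, Set.mem_union, Set.mem_insert_iff, Set.mem_singleton_iff, hxb]
          tauto
      rw [hdiff, Set.ncard_insert_of_notMem (fun h => hbS h.1), hAi]

theorem alphaK_eq (h : InRk G k i Set.univ) : alphaK G k = Nat.card V - i := by
  have hsplit (A : Set V) : A.ncard + (Set.univ \ A).ncard = Nat.card V := by
    rw [← Set.compl_eq_univ_sdiff, Set.ncard_add_ncard_compl]
  refine IsGreatest.csSup_eq ⟨?_, ?_⟩
  · obtain ⟨A, -, hA, hAi⟩ := h.exists_isGenKIndep_ncard_sdiff_eq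
    exact ⟨A, hA, by have := hsplit A; omega⟩
  · rintro _ ⟨A, hA, rfl⟩
    have := h.le_ncard_sdiff hA
    have := hsplit A
    omega

end InRk

end

theorem alphaK_of_mem_Rk_general {V : Type*} (T : SimpleGraph V) (k : ℕ)
    (hR : InRk T k (Nat.card V / k) Set.univ) :
    (alphaK T k : ℚ) = ((k : ℚ) - 1) / k * (Nat.card V) := by
  have hi := hR.index_pos
  have hk : k ≠ 0 := by rintro rfl; simp at hi
  have : Finite V := Nat.finite_of_card_ne_zero fun h => by simp [h] at hi
  set i := Nat.card V / k
  have hn : Nat.card V = k * i := (Set.ncard_univ V).symm.trans hR.ncard_eq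
  rw [hR.alphaK_eq, hn, Nat.cast_sub (Nat.le_mul_of_pos_left i (by omega))]
  push_cast
  field_simp

/-- If `T` is a tree on `n` vertices with `k ∣ n` and `T ∈ R^k_{n/k}`, then
`α_k(T) = ((k-1)/k)·n`. -/
theorem alphaK_of_mem_Rk {V : Type*} [Fintype V] (T : SimpleGraph V) (hT : T.IsTree)
    (k : ℕ) (hk : 2 ≤ k) (hdvd : k ∣ Nat.card V)
    (hR : InRk T k (Nat.card V / k) Set.univ) :
    (alphaK T k : ℚ) = ((k : ℚ) - 1) / k * (Nat.card V) :=
  alphaK_of_mem_Rk_general T k hR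
end

section
/- Let T be a tree on n vertices with k ≥ 2 and α_k(T) = ((k−1)/k)·n. Then k divides n and T ∈ R^k_{n/k}, i.e., T can be obtained by starting from a tree on k vertices and repeatedly attaching a tree on k vertices via a single edge. -/
open SimpleGraph

/-
In a forest, take an edge `pu` of a subtree `A` whose side `B` at `u` (the part of `A`
containing `u` once the edge is cut) is minimal subject to `|B| ≥ k`. Every branch of `B` at `u`
is a smaller side, so `B \ {u}` is `k`-independent; it has no edge to the other side `A'`, so it
can be glued to any `k`-independent subset of `A'`. Induction on `|A|` gives
`α_k(A) ≥ |A| - ⌊|A|/k⌋`. If `|A| = km` and `α_k(A) = (k - 1)m`, gluing forces `|B| = k` and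
`α_k(A') = (k - 1)(m - 1)`, so `A` is `A' ∈ R^k_{m-1}` with the tree `B` attached by the single
edge `pu`. Divisibility `k ∣ n` comes from `k α_k(T) = (k - 1) n` with `gcd(k, k - 1) = 1`.
-/

namespace SimpleGraph

variable {V : Type*} {G : SimpleGraph V}

def ReachableIn (G : SimpleGraph V) (S : Set V) (x y : V) : Prop :=
  ∃ w : G.Walk x y, ∀ z ∈ w.support, z ∈ S

def componentIn (G : SimpleGraph V) (S : Set V) (x : V) : Set V :=
  {y | G.ReachableIn S x y}

def PreconnectedOn (G : SimpleGraph V) (A : Set V) : Prop :=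
  ∀ x ∈ A, ∀ y ∈ A, G.ReachableIn A x y

section ReachableIn

variable {S S' : Set V} {x y z : V}

theorem ReachableIn.refl (hx : x ∈ S) : G.ReachableIn S x x :=
  ⟨.nil, by simpa using hx⟩

theorem ReachableIn.symm (h : G.ReachableIn S x y) : G.ReachableIn S y x := by
  obtain ⟨w, hw⟩ := h
  exact ⟨w.reverse, by simpa using hw⟩

theorem ReachableIn.trans (h : G.ReachableIn S x y) (h' : G.ReachableIn S y z) :
    G.ReachableIn S x z := by
  obtain ⟨w, hw⟩ := h
  obtain ⟨w', hw'⟩ := h'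
  exact ⟨w.append w', fun a ha => (Walk.mem_support_append_iff _ _).mp ha |>.elim (hw a) (hw' a)⟩

theorem ReachableIn.mem_right (h : G.ReachableIn S x y) : y ∈ S := by
  obtain ⟨w, hw⟩ := h
  exact hw _ w.end_mem_support

theorem ReachableIn.mono (hS : S ⊆ S') (h : G.ReachableIn S x y) : G.ReachableIn S' x y := by
  obtain ⟨w, hw⟩ := h
  exact ⟨w, fun a ha => hS (hw a ha)⟩

theorem ReachableIn.of_adj (h : G.Adj x y) (hx : x ∈ S) (hy : y ∈ S) : G.ReachableIn S x y :=
  ⟨h.toWalk, by simp [hx, hy]⟩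

theorem reachableIn_of_walk_induce :
    ∀ {a b : S}, (G.induce S).Walk a b → G.ReachableIn S a b
  | a, _, .nil => .refl a.2
  | a, _, .cons (v := b) h w =>
    (ReachableIn.of_adj (G := G) h a.2 b.2).trans (reachableIn_of_walk_induce w)

theorem reachableIn_iff_reachable_induce (hx : x ∈ S) (hy : y ∈ S) :
    G.ReachableIn S x y ↔ (G.induce S).Reachable ⟨x, hx⟩ ⟨y, hy⟩ :=
  ⟨fun ⟨w, hw⟩ => ⟨w.induce S hw⟩, fun ⟨w⟩ => reachableIn_of_walk_induce w⟩

theorem componentIn_subset : G.componentIn S x ⊆ S :=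
  fun _ h => h.mem_right

theorem mem_componentIn_self (hx : x ∈ S) : x ∈ G.componentIn S x :=
  .refl hx

theorem componentIn_mono (hS : S ⊆ S') : G.componentIn S x ⊆ G.componentIn S' x :=
  fun _ h => h.mono hS

theorem componentIn_eq_of_mem (h : y ∈ G.componentIn S x) :
    G.componentIn S y = G.componentIn S x :=
  Set.ext fun _ => ⟨h.trans, (ReachableIn.symm h).trans⟩

theorem mem_componentIn_of_adj (h : y ∈ G.componentIn S x) (hadj : G.Adj y z) (hz : z ∈ S) :
    z ∈ G.componentIn S x :=
  h.trans (.of_adj hadj h.mem_right hz)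

theorem preconnectedOn_componentIn : G.PreconnectedOn (G.componentIn S x) := by
  classical
  suffices h : ∀ y ∈ G.componentIn S x, G.ReachableIn (G.componentIn S x) x y from
    fun a ha b hb => (h a ha).symm.trans (h b hb)
  rintro y ⟨w, hw⟩
  -- every vertex of `w` is reached from `x` by an initial segment of `w`
  exact ⟨w, fun z hz =>
    ⟨w.takeUntil z hz, fun v hv => hw v (w.support_takeUntil_subset_support hz hv)⟩⟩

theorem preconnectedOn_univ (hG : G.Preconnected) : G.PreconnectedOn Set.univ :=
  fun x _ y _ => ⟨(hG x y).some, fun _ _ => trivial⟩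

theorem image_val_supp_connectedComponentMk_induce (hx : x ∈ S) :
    Subtype.val '' ((G.induce S).connectedComponentMk ⟨x, hx⟩).supp = G.componentIn S x := by
  ext y
  constructor
  · rintro ⟨⟨y, hy⟩, hmem, rfl⟩
    rw [ConnectedComponent.mem_supp_iff, ConnectedComponent.eq] at hmem
    exact ((reachableIn_iff_reachable_induce hy hx).mpr hmem).symm
  · intro h
    refine ⟨⟨y, h.mem_right⟩, ?_, rfl⟩
    rw [ConnectedComponent.mem_supp_iff, ConnectedComponent.eq]
    exact (reachableIn_iff_reachable_induce _ hx).mp (ReachableIn.symm h)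

theorem isTree_induce_of_preconnectedOn {A : Set V} (hG : G.IsAcyclic) (hA : G.PreconnectedOn A)
    (hne : A.Nonempty) : (G.induce A).IsTree := by
  have : Nonempty A := hne.to_subtype
  refine ⟨⟨fun ⟨a, ha⟩ ⟨b, hb⟩ => ?_⟩, hG.induce A⟩
  exact (reachableIn_iff_reachable_induce ha hb).mp (hA a ha b hb)

theorem support_subset_of_forall_not_adj (hsep : ∀ a ∈ S, ∀ b ∈ S', ¬ G.Adj a b) :
    ∀ {x y : V} (w : G.Walk x y), (∀ z ∈ w.support, z ∈ S ∪ S') → x ∈ S →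
      ∀ z ∈ w.support, z ∈ S
  | _, _, .nil, _, hx => by simpa using hx
  | _, _, .cons h w, hw, hx => by
    have hy : _ ∈ S := (hw _ (by simp)).resolve_right (hsep _ hx _ · h)
    simpa [hx] using support_subset_of_forall_not_adj hsep w (fun z hz => hw z (by simp [hz])) hy

theorem componentIn_union_of_forall_not_adj (hsep : ∀ a ∈ S, ∀ b ∈ S', ¬ G.Adj a b)
    (hx : x ∈ S) : G.componentIn (S ∪ S') x = G.componentIn S x :=
  (componentIn_mono Set.subset_union_left).antisymm' fun _ ⟨w, hw⟩ =>
    ⟨w, support_subset_of_forall_not_adj hsep w hw hx⟩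

end ReachableIn

section Sides

variable {A : Set V} {u p y : V}

theorem disjoint_componentIn_of_adj (hG : G.IsAcyclic) (hadj : G.Adj u p) :
    Disjoint (G.componentIn (A \ {p}) u) (G.componentIn (A \ {u}) p) := by
  classical
  rw [Set.disjoint_left]
  rintro z ⟨w₁, hw₁⟩ ⟨w₂, hw₂⟩
  -- otherwise the path from `u` to `z` avoiding `p` and the one through `p` would differ
  have hu : u ∉ w₂.bypass.support := fun h => (hw₂ u (w₂.support_bypass_subset_support h)).2 rfl
  have hpath : w₁.bypass = .cons hadj w₂.bypass := congrArg Subtype.val <|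
    (hG.subsingleton_path u z).elim ⟨_, w₁.bypass_isPath⟩ ⟨_, w₂.bypass_isPath.cons hu⟩
  have hp : p ∈ w₁.bypass.support := by simp [hpath]
  exact (hw₁ p (w₁.support_bypass_subset_support hp)).2 rfl

theorem exists_adj_reachableIn_sdiff (hA : G.PreconnectedOn A) (hu : u ∈ A) (hy : y ∈ A)
    (hyu : y ≠ u) : ∃ c, G.Adj u c ∧ G.ReachableIn (A \ {u}) c y := by
  classical
  obtain ⟨w, hw⟩ := hA u hu y hy
  have hP := w.bypass_isPath
  have hsupp : ∀ z ∈ w.bypass.support, z ∈ A :=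
    fun z hz => hw z (w.support_bypass_subset_support hz)
  generalize w.bypass = P at hP hsupp
  cases P with
  | nil => exact absurd rfl hyu
  | cons h q =>
    rw [Walk.cons_isPath_iff] at hP
    exact ⟨_, h, q, fun z hz => ⟨hsupp z (by simp [hz]), fun hzu => hP.2 (hzu ▸ hz)⟩⟩

theorem subset_componentIn_union_of_adj (hA : G.PreconnectedOn A) (hu : u ∈ A)
    (hadj : G.Adj u p) : A ⊆ G.componentIn (A \ {p}) u ∪ G.componentIn (A \ {u}) p := by
  classical
  intro y hy
  obtain rfl | hyu := eq_or_ne y u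
  · exact .inl (mem_componentIn_self ⟨hy, hadj.ne⟩)
  obtain ⟨c, hc, q, hq⟩ := exists_adj_reachableIn_sdiff hA hu hy hyu
  by_cases hpq : p ∈ q.support
  · exact .inr ⟨q.dropUntil p hpq, fun z hz => hq z (q.support_dropUntil_subset_support hpq hz)⟩
  · refine .inl ⟨.cons hc q, fun z hz => ?_⟩
    obtain rfl | hz := List.mem_cons.mp (Walk.support_cons hc q ▸ hz)
    · exact ⟨hu, hadj.ne⟩
    · exact ⟨(hq z hz).1, fun hzp => hpq (hzp ▸ hz)⟩

theorem eq_and_eq_of_adj_of_mem_componentIn (hG : G.IsAcyclic) (hadj : G.Adj u p) {a b : V}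
    (ha : a ∈ G.componentIn (A \ {p}) u) (hb : b ∈ G.componentIn (A \ {u}) p)
    (hab : G.Adj a b) : a = u ∧ b = p := by
  have hdisj := Set.disjoint_left.mp (disjoint_componentIn_of_adj (A := A) hG hadj)
  have hbp : b = p := by_contra fun hbp =>
    hdisj (mem_componentIn_of_adj ha hab ⟨(componentIn_subset hb).1, hbp⟩) hb
  subst hbp
  exact ⟨by_contra fun hau =>
    hdisj ha (mem_componentIn_of_adj hb hab.symm ⟨(componentIn_subset ha).1, hau⟩), rfl⟩

theorem existsUnique_adj_componentIn (hG : G.IsAcyclic) (hp : p ∈ A) (hu : u ∈ A)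
    (hadj : G.Adj p u) : ∃! q : V × V, q.1 ∈ G.componentIn (A \ {u}) p ∧
      q.2 ∈ G.componentIn (A \ {p}) u ∧ G.Adj q.1 q.2 := by
  refine ⟨(p, u), ⟨mem_componentIn_self ⟨hp, hadj.ne⟩, mem_componentIn_self ⟨hu, hadj.ne'⟩,
    hadj⟩, fun ⟨a, b⟩ ⟨ha, hb, hab⟩ => ?_⟩
  obtain ⟨rfl, rfl⟩ := eq_and_eq_of_adj_of_mem_componentIn hG hadj.symm hb ha hab.symm
  rfl

theorem componentIn_union_componentIn_of_adj (hA : G.PreconnectedOn A)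
    (hu : u ∈ A) (hadj : G.Adj u p) :
    G.componentIn (A \ {u}) p ∪ G.componentIn (A \ {p}) u = A := by
  refine (Set.union_subset (componentIn_subset.trans Set.sdiff_subset)
    (componentIn_subset.trans Set.sdiff_subset)).antisymm ?_
  rw [Set.union_comm]
  exact subset_componentIn_union_of_adj hA hu hadj

theorem componentIn_sdiff_subset_of_adj (hG : G.IsAcyclic) (hA : G.PreconnectedOn A)
    (hu : u ∈ A) (hadj : G.Adj u p) (hy : y ∈ G.componentIn (A \ {p}) u) :
    G.componentIn (A \ {u}) y ⊆ G.componentIn (A \ {p}) u \ {u} := by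
  intro z hz
  have hzA : z ∈ A \ {u} := hz.mem_right
  refine ⟨(subset_componentIn_union_of_adj hA hu hadj hzA.1).resolve_right fun hzp => ?_, hzA.2⟩
  have hyp : y ∈ G.componentIn (A \ {u}) p := ReachableIn.trans hzp (ReachableIn.symm hz)
  exact Set.disjoint_left.mp (disjoint_componentIn_of_adj hG hadj) hy hyp

theorem ncard_componentIn_add_ncard_componentIn [Finite V] (hG : G.IsAcyclic)
    (hA : G.PreconnectedOn A) (hu : u ∈ A) (hadj : G.Adj u p) :
    (G.componentIn (A \ {u}) p).ncard + (G.componentIn (A \ {p}) u).ncard = A.ncard := by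
  rw [← Set.ncard_union_eq (disjoint_componentIn_of_adj hG hadj).symm,
    componentIn_union_componentIn_of_adj hA hu hadj]

end Sides

end SimpleGraph

section GenKIndep

variable {V : Type*} {G : SimpleGraph V} {k : ℕ} {A S S' : Set V} {p u : V}

theorem isGenKIndep_iff_s11 : IsGenKIndep G k S ↔ ∀ v ∈ S, (G.componentIn S v).ncard ≤ k - 1 := by
  have hcard : ∀ v (hv : v ∈ S),
      Nat.card ((G.induce S).connectedComponentMk ⟨v, hv⟩).supp = (G.componentIn S v).ncard := by
    intro v hv
    rw [Nat.card_coe_set_eq, ← Set.ncard_image_of_injective _ Subtype.val_injective,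
      image_val_supp_connectedComponentMk_induce hv]
  refine ⟨fun h v hv => hcard v hv ▸ h _, fun h c => ?_⟩
  induction c using ConnectedComponent.ind with
  | h v => exact hcard v.1 v.2 ▸ h v.1 v.2

theorem IsGenKIndep.union_s11 (h : IsGenKIndep G k S) (h' : IsGenKIndep G k S')
    (hsep : ∀ a ∈ S, ∀ b ∈ S', ¬ G.Adj a b) : IsGenKIndep G k (S ∪ S') := by
  rw [isGenKIndep_iff_s11] at h h' ⊢
  rintro v (hv | hv)
  · rw [componentIn_union_of_forall_not_adj hsep hv]
    exact h v hv
  · rw [Set.union_comm,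
      componentIn_union_of_forall_not_adj (fun b hb a ha hba => hsep a ha b hb hba.symm) hv]
    exact h' v hv

theorem isGenKIndep_of_ncard_lt [Finite V] (h : S.ncard < k) : IsGenKIndep G k S :=
  isGenKIndep_iff_s11.mpr fun _ _ =>
    Nat.le_sub_one_of_lt ((Set.ncard_le_ncard componentIn_subset).trans_lt h)

theorem ncard_le_alphaK [Finite V] (h : IsGenKIndep G k S) : S.ncard ≤ alphaK G k :=
  le_csSup ⟨Nat.card V, by rintro _ ⟨S, -, rfl⟩; exact Set.ncard_le_card S⟩ ⟨S, h, rfl⟩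

theorem isGenKIndep_sdiff_singleton (hA : G.PreconnectedOn A) (hu : u ∈ A)
    (h : ∀ c ∈ A, G.Adj u c → (G.componentIn (A \ {u}) c).ncard ≤ k - 1) :
    IsGenKIndep G k (A \ {u}) := by
  refine isGenKIndep_iff_s11.mpr fun v hv => ?_
  obtain ⟨c, hc, hcv⟩ := exists_adj_reachableIn_sdiff hA hu hv.1 hv.2
  rw [componentIn_eq_of_mem hcv]
  exact h c (ReachableIn.symm hcv).mem_right.1 hc

section Forest

variable [Finite V]

theorem exists_adj_isGenKIndep_componentIn_sdiff (hG : G.IsAcyclic) (hA : G.PreconnectedOn A)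
    (hbig : ∃ p u, p ∈ A ∧ u ∈ A ∧ G.Adj p u ∧ k ≤ (G.componentIn (A \ {p}) u).ncard) :
    ∃ p u, p ∈ A ∧ u ∈ A ∧ G.Adj p u ∧ k ≤ (G.componentIn (A \ {p}) u).ncard ∧
      IsGenKIndep G k (G.componentIn (A \ {p}) u \ {u}) := by
  obtain ⟨⟨p, u⟩, ⟨hp, hu, hadj, hk⟩, hmin⟩ :=
    (measure fun q : V × V => (G.componentIn (A \ {q.1}) q.2).ncard).wf.has_min
      {q | q.1 ∈ A ∧ q.2 ∈ A ∧ G.Adj q.1 q.2 ∧ k ≤ (G.componentIn (A \ {q.1}) q.2).ncard}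
      (by obtain ⟨p, u, h⟩ := hbig; exact ⟨(p, u), h⟩)
  have huB : u ∈ G.componentIn (A \ {p}) u := mem_componentIn_self ⟨hu, hadj.ne'⟩
  refine ⟨p, u, hp, hu, hadj, hk,
    isGenKIndep_sdiff_singleton preconnectedOn_componentIn huB fun c hc huc => ?_⟩
  -- the branch at `u` towards `c` is again a side of an edge, and a strictly smaller one
  have hsub := componentIn_sdiff_subset_of_adj hG hA hu hadj.symm hc
  have hlt : (G.componentIn (A \ {u}) c).ncard < (G.componentIn (A \ {p}) u).ncard :=
    Set.ncard_lt_ncard (hsub.trans_ssubset (Set.sdiff_singleton_ssubset.mpr huB))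
  have hcA : c ∈ A := (componentIn_subset hc).1
  calc (G.componentIn (G.componentIn (A \ {p}) u \ {u}) c).ncard
      ≤ (G.componentIn (A \ {u}) c).ncard :=
        Set.ncard_le_ncard (componentIn_mono (Set.sdiff_subset_sdiff_left
          (componentIn_subset.trans Set.sdiff_subset)))
    _ ≤ k - 1 := Nat.le_sub_one_of_lt <| lt_of_not_ge fun hkc =>
        hmin (u, c) ⟨hu, hcA, huc, hkc⟩ hlt

theorem exists_isGenKIndep_union_componentIn (hG : G.IsAcyclic) (hu : u ∈ A) (hadj : G.Adj p u)
    (hB : IsGenKIndep G k (G.componentIn (A \ {p}) u \ {u}))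
    (hSA : S ⊆ G.componentIn (A \ {u}) p) (hS : IsGenKIndep G k S) :
    ∃ S' ⊆ A, IsGenKIndep G k S' ∧
      S'.ncard + 1 = S.ncard + (G.componentIn (A \ {p}) u).ncard := by
  have huB : u ∈ G.componentIn (A \ {p}) u := mem_componentIn_self ⟨hu, hadj.ne'⟩
  have hdisj : Disjoint S (G.componentIn (A \ {p}) u \ {u}) :=
    (disjoint_componentIn_of_adj hG hadj.symm).symm.mono hSA Set.sdiff_subset
  refine ⟨S ∪ (G.componentIn (A \ {p}) u \ {u}),
    Set.union_subset (hSA.trans (componentIn_subset.trans Set.sdiff_subset))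
      (Set.sdiff_subset.trans (componentIn_subset.trans Set.sdiff_subset)),
    hS.union_s11 hB fun a ha b hb hab => ?_, ?_⟩
  · exact hb.2 (eq_and_eq_of_adj_of_mem_componentIn hG hadj.symm hb.1 (hSA ha) hab.symm).1
  · rw [Set.ncard_union_eq hdisj, add_assoc, Set.ncard_sdiff_singleton_add_one huB]

theorem exists_adj_le_ncard_componentIn (hA : G.PreconnectedOn A) (hk : 1 ≤ k)
    (h : 2 * k ≤ A.ncard) :
    ∃ p u, p ∈ A ∧ u ∈ A ∧ G.Adj p u ∧ k ≤ (G.componentIn (A \ {p}) u).ncard := by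
  obtain ⟨x, hx, y, hy, hxy⟩ := (Set.one_lt_ncard_iff_nontrivial.mp (by omega) : A.Nontrivial)
  obtain ⟨c, hc, hcy⟩ := exists_adj_reachableIn_sdiff hA hx hy hxy.symm
  have hcA : c ∈ A := (ReachableIn.symm hcy).mem_right.1
  have hcover := (Set.ncard_le_ncard (subset_componentIn_union_of_adj hA hx hc)).trans
    (Set.ncard_union_le _ _)
  by_cases hkx : k ≤ (G.componentIn (A \ {c}) x).ncard
  · exact ⟨c, x, hcA, hx, hc.symm, hkx⟩
  · exact ⟨x, c, hx, hcA, hc, by omega⟩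

theorem exists_isGenKIndep_subset_ncard_le (hk : 1 ≤ k) (hG : G.IsAcyclic)
    (hA : G.PreconnectedOn A) : ∃ S ⊆ A, IsGenKIndep G k S ∧ A.ncard ≤ S.ncard + A.ncard / k := by
  induction hn : A.ncard using Nat.strong_induction_on generalizing A with
  | _ n ih =>
  subst hn
  by_cases hsmall : A.ncard < k
  · exact ⟨A, subset_rfl, isGenKIndep_of_ncard_lt hsmall, le_self_add⟩
  by_cases hbig : ∃ p u, p ∈ A ∧ u ∈ A ∧ G.Adj p u ∧ k ≤ (G.componentIn (A \ {p}) u).ncard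
  · obtain ⟨p, u, -, hu, hadj, hkB, hB⟩ := exists_adj_isGenKIndep_componentIn_sdiff hG hA hbig
    have hsum := ncard_componentIn_add_ncard_componentIn hG hA hu hadj.symm
    obtain ⟨S, hSA', hS, hScard⟩ :=
      ih (G.componentIn (A \ {u}) p).ncard (by omega) preconnectedOn_componentIn rfl
    obtain ⟨S', hS'A, hS', hS'card⟩ := exists_isGenKIndep_union_componentIn hG hu hadj hB hSA' hS
    have hdiv : (G.componentIn (A \ {u}) p).ncard / k + 1 ≤ A.ncard / k := by
      rw [← Nat.add_div_right _ (by omega)]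
      exact Nat.div_le_div_right (by omega)
    exact ⟨S', hS'A, hS', by omega⟩
  · push Not at hbig
    obtain ⟨u, hu⟩ := Set.nonempty_of_ncard_ne_zero (s := A) (by omega)
    have hdiv : 1 ≤ A.ncard / k := (Nat.one_le_div_iff (by omega)).mpr (by omega)
    refine ⟨A \ {u}, Set.sdiff_subset, isGenKIndep_sdiff_singleton hA hu fun c hc huc =>
      Nat.le_sub_one_of_lt (hbig u c hu hc huc), ?_⟩
    have := Set.ncard_sdiff_singleton_add_one hu
    omega

theorem inRk_of_forall_isGenKIndep (hk : 2 ≤ k) (hG : G.IsAcyclic) {m : ℕ} (hm : 1 ≤ m)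
    (hA : G.PreconnectedOn A) (hcard : A.ncard = k * m)
    (hα : ∀ S ⊆ A, IsGenKIndep G k S → S.ncard + m ≤ k * m) : InRk G k m A := by
  induction m, hm using Nat.le_induction generalizing A with
  | base =>
    have hne : A.Nonempty := Set.nonempty_of_ncard_ne_zero (by omega)
    exact .base A (by omega) (isTree_induce_of_preconnectedOn hG hA hne)
  | succ m hm ih =>
  have hkm : k * (m + 1) = k * m + k := mul_add_one k m
  obtain ⟨p, u, hp, hu, hadj, hkB, hB⟩ := exists_adj_isGenKIndep_componentIn_sdiff hG hA
    (exists_adj_le_ncard_componentIn (k := k) hA (by omega) (by nlinarith))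
  have hsum := ncard_componentIn_add_ncard_componentIn hG hA hu hadj.symm
  -- a larger side at `u` would glue with a large independent set of the side at `p` to beat `α`
  have hBk : (G.componentIn (A \ {p}) u).ncard = k := by
    by_contra hne
    obtain ⟨S, hSA', hS, hScard⟩ := exists_isGenKIndep_subset_ncard_le (k := k) (by omega) hG
      (preconnectedOn_componentIn (x := p))
    obtain ⟨S', hS'A, hS', hS'card⟩ :=
      exists_isGenKIndep_union_componentIn hG hu hadj hB hSA' hS
    have hdiv : (G.componentIn (A \ {u}) p).ncard / k < m := Nat.div_lt_of_lt_mul (by omega)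
    have := hα S' hS'A hS'
    omega
  have hrest : InRk G k m (G.componentIn (A \ {u}) p) :=
    ih preconnectedOn_componentIn (by omega) fun S hSA' hS => by
      obtain ⟨S', hS'A, hS', hS'card⟩ :=
        exists_isGenKIndep_union_componentIn hG hu hadj hB hSA' hS
      have := hα S' hS'A hS'
      omega
  have hB_tree : (G.induce (G.componentIn (A \ {p}) u)).IsTree :=
    isTree_induce_of_preconnectedOn hG preconnectedOn_componentIn
      ⟨u, mem_componentIn_self ⟨hu, hadj.ne'⟩⟩
  have hstep := InRk.step m _ _ hrest (disjoint_componentIn_of_adj hG hadj.symm).symm hBk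
    hB_tree (existsUnique_adj_componentIn hG hp hu hadj)
  rwa [componentIn_union_componentIn_of_adj hA hu hadj.symm] at hstep

end Forest

end GenKIndep

theorem exists_eq_mul_and_add_eq_mul_of_cast_eq {a n k : ℕ} (hk : 1 ≤ k)
    (h : (a : ℚ) = ((k : ℚ) - 1) / k * n) : ∃ m, n = k * m ∧ a + m = k * m := by
  obtain ⟨j, rfl⟩ : ∃ j, k = j + 1 := ⟨k - 1, by omega⟩
  have hmul : a * (j + 1) = j * n := by
    have : (a : ℚ) * (j + 1) = j * n := by
      rw [h]
      push_cast
      field_simp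
      ring
    exact_mod_cast this
  obtain ⟨m, rfl⟩ : j + 1 ∣ n :=
    (Nat.coprime_self_add_left.mpr (Nat.coprime_one_left j)).dvd_of_dvd_mul_left
      ⟨a, by rw [← hmul, mul_comm]⟩
  have ha : a = j * m := Nat.eq_of_mul_eq_mul_right (by omega : 0 < j + 1) (by rw [hmul]; ring)
  exact ⟨m, rfl, by rw [ha]; ring⟩

/-- If a tree `T` on `n` vertices satisfies `α_k(T) = ((k-1)/k)·n`, then `k ∣ n` and
`T ∈ R^k_{n/k}`. -/
theorem mem_Rk_of_alphaK_eq {V : Type*} [Fintype V] (T : SimpleGraph V) (hT : T.IsTree)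
    (k : ℕ) (hk : 2 ≤ k)
    (heq : (alphaK T k : ℚ) = ((k : ℚ) - 1) / k * (Nat.card V)) :
    k ∣ Nat.card V ∧ InRk T k (Nat.card V / k) Set.univ := by
  obtain ⟨m, hn, hα⟩ := exists_eq_mul_and_add_eq_mul_of_cast_eq (by omega) heq
  have : Nonempty V := hT.connected.nonempty
  have hm : 1 ≤ m := Nat.pos_of_ne_zero fun h => by simp [h] at hn
  refine ⟨⟨m, hn⟩, ?_⟩
  rw [hn, Nat.mul_div_cancel_left m (by omega)]
  refine inRk_of_forall_isGenKIndep hk hT.isAcyclic hm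
    (preconnectedOn_univ hT.connected.preconnected) (by rw [Set.ncard_univ, hn]) fun S _ hS => ?_
  have := ncard_le_alphaK hS
  omega
end
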